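/- Let R be a commutative ring, 𝔗 a torsion theory over R, M an R-module, and x₁,…,x_r a sequence of elements of R. Consider the conditions: (a) x_i ∉ ⋃_{𝔭 ∈ 𝔗-wAss_R(M/(x₁,…,x_{i−1})M)} 𝔭 for all i = 1,…,r; (b) x₁,…,x_r is a weak M-regular sequence with respect to 𝔗; (c) for every 𝔭 ∈ 𝔗-Supp_R(M), the images x₁/1,…,x_r/1 in the localization R_𝔭 form a weak M_𝔭-regular sequence. Then (c) is equivalent to (a), and (b) implies (c). -/
import Mathlib


open CategoryTheory

universe u

noncomputable section

/-- A torsion theory over `R`: a class of `R`-modules closed under isomorphism, submodules,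
quotient modules, extensions, and directed colimits (formulated as closure under directed
unions of submodules). -/
structure IsTorsionTheory (R : Type u) [CommRing R] (T : Set (ModuleCat.{u} R)) : Prop where
  mem_of_iso : ∀ {N N' : ModuleCat.{u} R}, (N ≅ N') → N ∈ T → N' ∈ T
  submodule_mem : ∀ {N : ModuleCat.{u} R}, N ∈ T → ∀ S : Submodule R N,
    ModuleCat.of R S ∈ T
  quotient_mem : ∀ {N : ModuleCat.{u} R}, N ∈ T → ∀ S : Submodule R N,
    ModuleCat.of R (N ⧸ S) ∈ T
  ext_mem : ∀ {N : ModuleCat.{u} R} (S : Submodule R N),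
    ModuleCat.of R S ∈ T → ModuleCat.of R (N ⧸ S) ∈ T → N ∈ T
  directed_mem : ∀ {N : ModuleCat.{u} R} {ι : Type u} [Nonempty ι] (S : ι → Submodule R N),
    Directed (· ≤ ·) S → (∀ i, ModuleCat.of R (S i) ∈ T) → iSup S = ⊤ → N ∈ T

variable {R : Type u} [CommRing R]

/-- `x₁, …, x_n` is a weak `M`-regular sequence with respect to `𝔗` if the module
`((x₁,…,x_{i-1})M :_M x_i) / (x₁,…,x_{i-1})M` belongs to `𝔗` for all `i = 1, …, n`. -/
def IsWeakRegularSeqWrt (T : Set (ModuleCat.{u} R)) {n : ℕ} (x : Fin n → R) (M : Type u)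
    [AddCommGroup M] [Module R M] : Prop :=
  ∀ i : Fin n,
    ModuleCat.of R
      ↥(Submodule.map (Ideal.span (x '' {j | j < i}) • (⊤ : Submodule R M)).mkQ
        (Submodule.comap (LinearMap.lsmul R M (x i))
          (Ideal.span (x '' {j | j < i}) • (⊤ : Submodule R M)))) ∈ T

/-- The weakly associated primes of `M`: the primes that are minimal over the annihilator
`(0 :_R m)` of some `m ∈ M`. -/
def weakAssocPrimes (R : Type u) [CommRing R] (M : Type u) [AddCommGroup M] [Module R M] :
    Set (Ideal R) :=
  { p | ∃ m : M, p ∈ (Ideal.torsionOf R M m).minimalPrimes }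

/-- A weak `N`-regular sequence in the classical sense: each `y i` acts injectively on
`N/(y₁,…,y_{i-1})N` (with no requirement that `N ≠ (y₁,…,y_n)N`). -/
def IsClassicalWeakRegular {S : Type u} [CommRing S] (N : Type u) [AddCommGroup N]
    [Module S N] {n : ℕ} (y : Fin n → S) : Prop :=
  ∀ i : Fin n,
    IsSMulRegular (N ⧸ (Ideal.span (y '' {j | j < i}) • (⊤ : Submodule S N))) (y i)

section Helpers

lemma IsTorsionTheory.quot_ideal_mem {T : Set (ModuleCat.{u} R)} (hT : IsTorsionTheory R T)
    {q p : Ideal R} (h : q ≤ p) (hq : ModuleCat.of R (R ⧸ q) ∈ T) :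
    ModuleCat.of R (R ⧸ p) ∈ T := by
  have h2 := hT.quotient_mem hq (Submodule.map q.mkQ p)
  exact hT.mem_of_iso (Submodule.quotientQuotientEquivQuotient q p h).toModuleIso h2

lemma exists_mul_pow_mem_of_mem_minimalPrimes' {J q : Ideal R} (hq : q ∈ J.minimalPrimes)
    {a : R} (ha : a ∈ q) : ∃ u, u ∉ q ∧ ∃ k : ℕ, u * a ^ k ∈ J := by
  have hqp : q.IsPrime := hq.1.1
  have h1q : (1 : R) ∉ q := fun h1 => hqp.ne_top ((Ideal.eq_top_iff_one q).mpr h1)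
  by_contra hcon
  push_neg at hcon
  have hdisj : Disjoint (J : Set R) (Submonoid.closure ({a} ∪ (q : Set R)ᶜ) : Set R) := by
    have hform : ∀ z ∈ Submonoid.closure ({a} ∪ (q : Set R)ᶜ),
        ∃ u, u ∉ q ∧ ∃ k : ℕ, z = u * a ^ k := by
      intro z hzW
      induction hzW using Submonoid.closure_induction with
      | mem y hy =>
        rcases hy with hy | hy
        · exact ⟨1, h1q, 1, by rw [Set.mem_singleton_iff.mp hy]; ring⟩
        · exact ⟨y, hy, 0, by ring⟩
      | one => exact ⟨1, h1q, 0, by ring⟩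
      | mul y z' hy hz' ihy ihz =>
        obtain ⟨u, hu, k, rfl⟩ := ihy
        obtain ⟨v, hv, l, rfl⟩ := ihz
        exact ⟨u * v, fun h => ((hqp.mem_or_mem h).elim hu hv), k + l, by ring⟩
    rw [Set.disjoint_left]
    rintro z hzJ hzW
    obtain ⟨u, hu, k, rfl⟩ := hform z hzW
    exact hcon u hu k hzJ
  obtain ⟨q', hq'p, hJq', hq'W⟩ := Ideal.exists_le_prime_disjoint J _ hdisj
  have hq'q : q' ≤ q := by
    intro y hy
    by_contra hyq
    exact Set.disjoint_left.mp hq'W hy (Submonoid.subset_closure (Or.inr hyq))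
  have hqq' : q ≤ q' := hq.2 ⟨hq'p, hJq'⟩ hq'q
  exact Set.disjoint_left.mp hq'W (hqq' ha) (Submonoid.subset_closure (Or.inl rfl))

variable {M : Type u} [AddCommGroup M] [Module R M]


lemma algebraMap_smul_mk' (S : Submonoid R) (r : R) (m : M) (s : S) :
    algebraMap R (Localization S) r • LocalizedModule.mk m s = LocalizedModule.mk (r • m) s := by
  rw [← Localization.mk_one_eq_algebraMap, LocalizedModule.mk_smul_mk, one_mul]

lemma mk_mem_map_smul_top_iff (S : Submonoid R) (I : Ideal R) (m : M) (s : S) :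
    LocalizedModule.mk m s ∈
      Ideal.map (algebraMap R (Localization S)) I •
        (⊤ : Submodule (Localization S) (LocalizedModule S M)) ↔
    ∃ u : S, (u : R) • m ∈ I • (⊤ : Submodule R M) := by
  constructor
  · intro hz
    have key : ∀ z ∈ Ideal.map (algebraMap R (Localization S)) I •
        (⊤ : Submodule (Localization S) (LocalizedModule S M)),
        ∃ m' ∈ I • (⊤ : Submodule R M), ∃ s' : S, z = LocalizedModule.mk m' s' := by
      intro z hzm
      refine Submodule.smul_induction_on hzm ?_ ?_
      · intro r hr n _
        obtain ⟨⟨a, u⟩, hau⟩ := (IsLocalization.mem_map_algebraMap_iff S (Localization S)).mp hr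
        have hr' : r = Localization.mk (a : R) u := by
          rw [Localization.mk_eq_mk']
          exact IsLocalization.eq_mk'_iff_mul_eq.mpr hau
        induction n using LocalizedModule.induction_on with
        | h m' s' =>
          refine ⟨(a : R) • m', Submodule.smul_mem_smul a.2 Submodule.mem_top, u * s', ?_⟩
          rw [hr', LocalizedModule.mk_smul_mk]
      · rintro z₁ z₂ ⟨m₁, hm₁, s₁, rfl⟩ ⟨m₂, hm₂, s₂, rfl⟩
        refine ⟨s₂ • m₁ + s₁ • m₂, ?_, s₁ * s₂, ?_⟩
        · exact Submodule.add_mem _ (Submodule.smul_mem _ _ hm₁) (Submodule.smul_mem _ _ hm₂)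
        · rw [LocalizedModule.mk_add_mk]
    obtain ⟨m', hm', s', heq⟩ := key _ hz
    rw [LocalizedModule.mk_eq] at heq
    obtain ⟨c, hc⟩ := heq
    refine ⟨c * s', ?_⟩
    have hrw : ((c * s' : S) : R) • m = (c : R) • (s : R) • m' := by
      rw [Submonoid.coe_mul, mul_smul]
      simpa [Submonoid.smul_def] using hc
    rw [hrw]
    exact Submodule.smul_mem _ _ (Submodule.smul_mem _ _ hm')
  · rintro ⟨u, hu⟩
    have key : ∀ m₀ ∈ I • (⊤ : Submodule R M),
        LocalizedModule.mk m₀ (1 : S) ∈ Ideal.map (algebraMap R (Localization S)) I •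
          (⊤ : Submodule (Localization S) (LocalizedModule S M)) := by
      intro m₀ hm₀
      refine Submodule.smul_induction_on hm₀ ?_ ?_
      · intro r hr n _
        rw [show LocalizedModule.mk (r • n) (1 : S) =
            algebraMap R (Localization S) r • LocalizedModule.mk n (1 : S) from
          (algebraMap_smul_mk' S r n 1).symm]
        exact Submodule.smul_mem_smul (Ideal.mem_map_of_mem _ hr) Submodule.mem_top
      · intro m₁ m₂ h₁ h₂
        rw [show LocalizedModule.mk (m₁ + m₂) (1 : S) =
            LocalizedModule.mk m₁ (1 : S) + LocalizedModule.mk m₂ (1 : S) by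
          rw [LocalizedModule.mk_add_mk]; simp [Submonoid.smul_def]]
        exact Submodule.add_mem _ h₁ h₂
    have h1 : LocalizedModule.mk m s =
        Localization.mk 1 (u * s) • LocalizedModule.mk ((u : R) • m) (1 : S) := by
      rw [LocalizedModule.mk_smul_mk, one_smul, mul_one]
      have := LocalizedModule.mk_cancel_common_left u s m
      rw [Submonoid.smul_def] at this
      exact this.symm
    rw [h1]
    exact Submodule.smul_mem _ _ (key _ hu)

lemma regular_of_avoid {T : Set (ModuleCat.{u} R)} (hT : IsTorsionTheory R T)
    (I : Ideal R) (a : R)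
    (ha : ∀ q ∈ weakAssocPrimes R (M ⧸ I • (⊤ : Submodule R M)),
      ModuleCat.of R (R ⧸ q) ∉ T → a ∉ q)
    (p : Ideal R) [p.IsPrime] (hp : ModuleCat.of R (R ⧸ p) ∉ T) :
    IsSMulRegular ((LocalizedModule p.primeCompl M) ⧸
      (Ideal.map (algebraMap R (Localization p.primeCompl)) I •
        (⊤ : Submodule (Localization p.primeCompl) (LocalizedModule p.primeCompl M))))
      (algebraMap R (Localization p.primeCompl) a) := by
  have key : ∀ z : LocalizedModule p.primeCompl M ⧸
      (Ideal.map (algebraMap R (Localization p.primeCompl)) I •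
        (⊤ : Submodule (Localization p.primeCompl) (LocalizedModule p.primeCompl M))),
      algebraMap R (Localization p.primeCompl) a • z = 0 → z = 0 := by
    intro z hz
    obtain ⟨y, rfl⟩ := Submodule.Quotient.mk_surjective _ z
    induction y using LocalizedModule.induction_on with
    | h m s =>
    rw [← Submodule.Quotient.mk_smul, Submodule.Quotient.mk_eq_zero, algebraMap_smul_mk',
      mk_mem_map_smul_top_iff] at hz
    obtain ⟨u, hu⟩ := hz
    have haJ : a ∈ Ideal.torsionOf R (M ⧸ I • (⊤ : Submodule R M))
        (Submodule.Quotient.mk ((u : R) • m)) := by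
      rw [Ideal.mem_torsionOf_iff, ← Submodule.Quotient.mk_smul,
        Submodule.Quotient.mk_eq_zero]
      rwa [smul_comm]
    by_cases hle : Ideal.torsionOf R (M ⧸ I • (⊤ : Submodule R M))
        (Submodule.Quotient.mk ((u : R) • m)) ≤ p
    · obtain ⟨q, hqmin, hqp⟩ := Ideal.exists_minimalPrimes_le hle
      have hqT : ModuleCat.of R (R ⧸ q) ∉ T := fun h => hp (hT.quot_ideal_mem hqp h)
      exact absurd (hqmin.1.2 haJ) (ha q ⟨_, hqmin⟩ hqT)
    · rw [SetLike.not_le_iff_exists] at hle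
      obtain ⟨v, hvJ, hvp⟩ := hle
      rw [Submodule.Quotient.mk_eq_zero, mk_mem_map_smul_top_iff]
      refine ⟨⟨v, hvp⟩ * u, ?_⟩
      rw [show ((⟨v, hvp⟩ * u : p.primeCompl) : R) • m = v • ((u : R) • m) by
        rw [Submonoid.coe_mul, mul_smul]]
      rw [Ideal.mem_torsionOf_iff, ← Submodule.Quotient.mk_smul,
        Submodule.Quotient.mk_eq_zero] at hvJ
      exact hvJ
  intro z w hzw
  simp only at hzw
  have := key (z - w) (by rw [smul_sub, hzw, sub_self])
  exact sub_eq_zero.mp this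

end Helpers

/-- **Theorem.** Let `𝔗` be a torsion theory, `M` an `R`-module and `x₁, …, x_r` a sequence
of elements of `R`. Consider the conditions:
(a) `x_i ∉ ⋃ {𝔭 ∈ 𝔗-wAss_R(M/(x₁,…,x_{i-1})M)}` for all `i`;
(b) `x₁, …, x_r` is a weak `M`-regular sequence with respect to `𝔗`;
(c) for every `𝔭 ∈ 𝔗-Supp_R(M)` the images `x₁/1, …, x_r/1` form a weak `M_𝔭`-regular
sequence over `R_𝔭`.
Then (c) ↔ (a), and (b) → (c). -/
theorem isClassicalWeakRegular_localization_iff_and_of_isWeakRegularSeqWrt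
    (T : Set (ModuleCat.{u} R)) (hT : IsTorsionTheory R T)
    (M : Type u) [AddCommGroup M] [Module R M] {r : ℕ} (x : Fin r → R) :
    ((∀ p : PrimeSpectrum R, p ∈ Module.support R M →
        ModuleCat.of R (R ⧸ p.asIdeal) ∉ T →
        IsClassicalWeakRegular (LocalizedModule p.asIdeal.primeCompl M)
          (fun i => algebraMap R (Localization p.asIdeal.primeCompl) (x i))) ↔
      (∀ i : Fin r, ∀ p ∈ weakAssocPrimes R
          (M ⧸ (Ideal.span (x '' {j | j < i}) • (⊤ : Submodule R M))),
          ModuleCat.of R (R ⧸ p) ∉ T → x i ∉ p)) ∧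
    (IsWeakRegularSeqWrt T x M →
      ∀ p : PrimeSpectrum R, p ∈ Module.support R M →
        ModuleCat.of R (R ⧸ p.asIdeal) ∉ T →
        IsClassicalWeakRegular (LocalizedModule p.asIdeal.primeCompl M)
          (fun i => algebraMap R (Localization p.asIdeal.primeCompl) (x i))) := by
  classical
  have hspan : ∀ (P : Ideal R) [P.IsPrime], ∀ (i : Fin r),
      Ideal.span ((fun j => algebraMap R (Localization P.primeCompl) (x j)) '' {j | j < i}) =
      Ideal.map (algebraMap R (Localization P.primeCompl)) (Ideal.span (x '' {j | j < i})) := by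
    intro P _ i
    rw [Ideal.map_span, Set.image_image]
  -- (a) → (c)
  have c_of_a : (∀ i : Fin r, ∀ p ∈ weakAssocPrimes R
          (M ⧸ (Ideal.span (x '' {j | j < i}) • (⊤ : Submodule R M))),
          ModuleCat.of R (R ⧸ p) ∉ T → x i ∉ p) →
      (∀ p : PrimeSpectrum R, p ∈ Module.support R M →
        ModuleCat.of R (R ⧸ p.asIdeal) ∉ T →
        IsClassicalWeakRegular (LocalizedModule p.asIdeal.primeCompl M)
          (fun i => algebraMap R (Localization p.asIdeal.primeCompl) (x i))) := by
    intro ha p _ hpT i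
    haveI := p.isPrime
    rw [hspan p.asIdeal i]
    exact regular_of_avoid hT _ _ (ha i) p.asIdeal hpT
  -- (c) → (a)
  have a_of_c : (∀ p : PrimeSpectrum R, p ∈ Module.support R M →
        ModuleCat.of R (R ⧸ p.asIdeal) ∉ T →
        IsClassicalWeakRegular (LocalizedModule p.asIdeal.primeCompl M)
          (fun i => algebraMap R (Localization p.asIdeal.primeCompl) (x i))) →
      (∀ i : Fin r, ∀ p ∈ weakAssocPrimes R
          (M ⧸ (Ideal.span (x '' {j | j < i}) • (⊤ : Submodule R M))),
          ModuleCat.of R (R ⧸ p) ∉ T → x i ∉ p) := by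
    intro hc i q hq hqT hxq
    obtain ⟨n, hn⟩ := hq
    have hqP : q.IsPrime := hn.1.1
    obtain ⟨m, rfl⟩ := Submodule.Quotient.mk_surjective _ n
    have hsupp : (⟨q, hqP⟩ : PrimeSpectrum R) ∈ Module.support R M := by
      rw [Module.mem_support_iff']
      refine ⟨m, fun v hv hvm => hv (hn.1.2 ?_)⟩
      rw [Ideal.mem_torsionOf_iff, ← Submodule.Quotient.mk_smul, hvm,
        Submodule.Quotient.mk_zero]
    have hreg := hc ⟨q, hqP⟩ hsupp hqT i
    haveI := hqP
    rw [hspan q i] at hreg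
    obtain ⟨u, huq, k, huk⟩ := exists_mul_pow_mem_of_mem_minimalPrimes' hn hxq
    -- descent
    have descent : ∀ k : ℕ,
        (∃ u, u ∉ q ∧ u • ((x i) ^ (k + 1) • m) ∈
          Ideal.span (x '' {j | j < i}) • (⊤ : Submodule R M)) →
        (∃ u, u ∉ q ∧ u • ((x i) ^ k • m) ∈
          Ideal.span (x '' {j | j < i}) • (⊤ : Submodule R M)) := by
      rintro k ⟨u', hu', hmem⟩
      have h1 : LocalizedModule.mk ((x i) ^ (k + 1) • m) (1 : q.primeCompl) ∈
          Ideal.map (algebraMap R (Localization q.primeCompl))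
            (Ideal.span (x '' {j | j < i})) •
          (⊤ : Submodule (Localization q.primeCompl) (LocalizedModule q.primeCompl M)) :=
        (mk_mem_map_smul_top_iff _ _ _ _).mpr ⟨⟨u', hu'⟩, hmem⟩
      have hpow : (x i) • ((x i) ^ k • m) = (x i) ^ (k + 1) • m := by
        rw [smul_smul, ← pow_succ']
      have h2 : algebraMap R (Localization q.primeCompl) (x i) •
          (Submodule.Quotient.mk (LocalizedModule.mk ((x i) ^ k • m) (1 : q.primeCompl)) :
            LocalizedModule q.primeCompl M ⧸
              Ideal.map (algebraMap R (Localization q.primeCompl))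
                (Ideal.span (x '' {j | j < i})) •
                (⊤ : Submodule (Localization q.primeCompl)
                  (LocalizedModule q.primeCompl M))) =
          algebraMap R (Localization q.primeCompl) (x i) •
          (0 : LocalizedModule q.primeCompl M ⧸
              Ideal.map (algebraMap R (Localization q.primeCompl))
                (Ideal.span (x '' {j | j < i})) •
                (⊤ : Submodule (Localization q.primeCompl)
                  (LocalizedModule q.primeCompl M))) := by
        rw [smul_zero, ← Submodule.Quotient.mk_smul, algebraMap_smul_mk', hpow,
          Submodule.Quotient.mk_eq_zero]
        exact h1
      have h3 := hreg h2
      rw [Submodule.Quotient.mk_eq_zero, mk_mem_map_smul_top_iff] at h3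
      obtain ⟨w, hw⟩ := h3
      exact ⟨w, w.2, hw⟩
    have hdown : ∀ k : ℕ,
        (∃ u, u ∉ q ∧ u • ((x i) ^ k • m) ∈
          Ideal.span (x '' {j | j < i}) • (⊤ : Submodule R M)) →
        (∃ u, u ∉ q ∧ u • ((x i) ^ 0 • m) ∈
          Ideal.span (x '' {j | j < i}) • (⊤ : Submodule R M)) := by
      intro k
      induction k with
      | zero => exact id
      | succ k ih => exact fun h => ih (descent k h)
    have hPk : ∃ u, u ∉ q ∧ u • ((x i) ^ k • m) ∈
        Ideal.span (x '' {j | j < i}) • (⊤ : Submodule R M) := by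
      refine ⟨u, huq, ?_⟩
      rw [smul_smul]
      rw [Ideal.mem_torsionOf_iff, ← Submodule.Quotient.mk_smul,
        Submodule.Quotient.mk_eq_zero] at huk
      exact huk
    obtain ⟨v, hvq, hv⟩ := hdown k hPk
    rw [pow_zero, one_smul] at hv
    refine hvq (hn.1.2 ?_)
    rw [Ideal.mem_torsionOf_iff, ← Submodule.Quotient.mk_smul,
      Submodule.Quotient.mk_eq_zero]
    exact hv
  -- (b) → (a)
  have a_of_b : IsWeakRegularSeqWrt T x M →
      (∀ i : Fin r, ∀ p ∈ weakAssocPrimes R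
          (M ⧸ (Ideal.span (x '' {j | j < i}) • (⊤ : Submodule R M))),
          ModuleCat.of R (R ⧸ p) ∉ T → x i ∉ p) := by
    intro hb i q hq hqT hxq
    obtain ⟨n, hn⟩ := hq
    have hqP : q.IsPrime := hn.1.1
    obtain ⟨m, rfl⟩ := Submodule.Quotient.mk_surjective _ n
    obtain ⟨u, huq, k, huk⟩ := exists_mul_pow_mem_of_mem_minimalPrimes' hn hxq
    have hex : ∃ k : ℕ, ∃ u, u ∉ q ∧
        (u * (x i) ^ k) • (Submodule.Quotient.mk m :
          M ⧸ (Ideal.span (x '' {j | j < i}) • (⊤ : Submodule R M))) = 0 :=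
      ⟨k, u, huq, (Ideal.mem_torsionOf_iff _ _).mp huk⟩
    have hk₀ : Nat.find hex ≠ 0 := by
      intro h
      obtain ⟨w, hwq, hw0⟩ := Nat.find_spec hex
      rw [h, pow_zero, mul_one] at hw0
      exact hwq (hn.1.2 ((Ideal.mem_torsionOf_iff _ _).mpr hw0))
    have hk1 : Nat.find hex - 1 + 1 = Nat.find hex :=
      Nat.succ_pred_eq_of_pos (Nat.pos_of_ne_zero hk₀)
    obtain ⟨v, hvq, hv0⟩ := Nat.find_spec hex
    set n' : M ⧸ (Ideal.span (x '' {j | j < i}) • (⊤ : Submodule R M)) :=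
      (v * (x i) ^ (Nat.find hex - 1)) • Submodule.Quotient.mk m with hn'def
    have hmul : (x i) * (v * (x i) ^ (Nat.find hex - 1)) = v * (x i) ^ (Nat.find hex) := by
      conv_rhs => rw [← hk1]
      rw [pow_succ]; ring
    have hxn' : (x i) • n' = 0 := by
      rw [hn'def, smul_smul, hmul]
      exact hv0
    have htor : Ideal.torsionOf R _ n' ≤ q := by
      intro w hw
      by_contra hwq
      rw [Ideal.mem_torsionOf_iff] at hw
      have hQ : ∃ u, u ∉ q ∧ (u * (x i) ^ (Nat.find hex - 1)) •
          (Submodule.Quotient.mk m :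
            M ⧸ (Ideal.span (x '' {j | j < i}) • (⊤ : Submodule R M))) = 0 := by
        refine ⟨w * v, fun h => (hqP.mem_or_mem h).elim hwq hvq, ?_⟩
        rw [show (w * v) * (x i) ^ (Nat.find hex - 1) =
            w * (v * (x i) ^ (Nat.find hex - 1)) by ring, mul_smul, ← hn'def]
        exact hw
      exact Nat.find_min hex (Nat.sub_lt (Nat.pos_of_ne_zero hk₀) Nat.one_pos) hQ
    have hn'm : n' = Submodule.Quotient.mk ((v * (x i) ^ (Nat.find hex - 1)) • m) := by
      rw [hn'def, Submodule.Quotient.mk_smul]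
    have hmem : (v * (x i) ^ (Nat.find hex - 1)) • m ∈
        Submodule.comap (LinearMap.lsmul R M (x i))
          (Ideal.span (x '' {j | j < i}) • (⊤ : Submodule R M)) := by
      rw [Submodule.mem_comap, LinearMap.lsmul_apply, ← Submodule.Quotient.mk_eq_zero,
        Submodule.Quotient.mk_smul, ← hn'm]
      exact hxn'
    have hn'K : n' ∈ Submodule.map
        (Ideal.span (x '' {j | j < i}) • (⊤ : Submodule R M)).mkQ
        (Submodule.comap (LinearMap.lsmul R M (x i))
          (Ideal.span (x '' {j | j < i}) • (⊤ : Submodule R M))) :=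
      Submodule.mem_map.mpr ⟨_, hmem, by rw [hn'm]; rfl⟩
    have hKT := hb i
    set K := Submodule.map
        (Ideal.span (x '' {j | j < i}) • (⊤ : Submodule R M)).mkQ
        (Submodule.comap (LinearMap.lsmul R M (x i))
          (Ideal.span (x '' {j | j < i}) • (⊤ : Submodule R M))) with hKdef
    have hsub := hT.submodule_mem hKT (Submodule.span R {(⟨n', hn'K⟩ : K)})
    have hquot : ModuleCat.of R (R ⧸ Ideal.torsionOf R K (⟨n', hn'K⟩ : K)) ∈ T :=
      hT.mem_of_iso (Ideal.quotTorsionOfEquivSpanSingleton R K _).symm.toModuleIso hsub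
    have htoreq : Ideal.torsionOf R K (⟨n', hn'K⟩ : K) =
        Ideal.torsionOf R _ n' := by
      ext w
      simp [Ideal.mem_torsionOf_iff, Subtype.ext_iff]
    rw [htoreq] at hquot
    exact hqT (hT.quot_ideal_mem htor hquot)
  exact ⟨⟨a_of_c, c_of_a⟩, fun hb => c_of_a (a_of_b hb)⟩
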